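/- arXiv:2209.14799 — 4 statements merged into one kernel-verified Lean document; each statement's English description precedes it below -/
import Mathlib

section
/- The polynomial equation defining 3-connected cubic planar maps, M^4 + (4z+3)M^3 + (6z^2+17z+3)M^2 + (4z^3+25z^2-14z+1)M + z^4+11z^3-z^2 = 0, has discriminant with respect to M equal to z^2(256z-27)^3 up to a nonzero constant factor; in particular its unique positive root is z = 27/256. -/
/-- The discriminant (with respect to `M`) of the quartic
`M^4 + (4z+3)M^3 + (6z^2+17z+3)M^2 + (4z^3+25z^2-14z+1)M + z^4+11z^3-z^2`,
computed by the standard formula for the discriminant of a monic quartic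
`M^4 + bM^3 + cM^2 + dM + e`. -/
noncomputable def disc3 (z : ℝ) : ℝ :=
  let b := 4 * z + 3
  let c := 6 * z ^ 2 + 17 * z + 3
  let d := 4 * z ^ 3 + 25 * z ^ 2 - 14 * z + 1
  let e := z ^ 4 + 11 * z ^ 3 - z ^ 2
  256 * e ^ 3 - 192 * b * d * e ^ 2 - 128 * c ^ 2 * e ^ 2 + 144 * c * d ^ 2 * e
    - 27 * d ^ 4 + 144 * b ^ 2 * c * e ^ 2 - 6 * b ^ 2 * d ^ 2 * e
    - 80 * b * c ^ 2 * d * e + 18 * b * c * d ^ 3 + 16 * c ^ 4 * e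
    - 4 * c ^ 3 * d ^ 2 - 27 * b ^ 4 * e ^ 2 + 18 * b ^ 3 * c * d * e
    - 4 * b ^ 3 * d ^ 3 - 4 * b ^ 2 * c ^ 3 * e + b ^ 2 * c ^ 2 * d ^ 2

lemma disc3_eq (z : ℝ) : disc3 z = z ^ 2 * (256 * z - 27) ^ 3 := by
  unfold disc3
  ring

/-- The discriminant of the quartic defining 3-connected cubic planar maps equals
`z^2 (256z - 27)^3` up to a nonzero constant factor, and its unique positive root
is `z = 27/256`. -/
theorem disc_three_connected_cubic :
    (∃ k : ℝ, k ≠ 0 ∧ ∀ z : ℝ, disc3 z = k * (z ^ 2 * (256 * z - 27) ^ 3)) ∧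
    (∀ z : ℝ, 0 < z → (disc3 z = 0 ↔ z = 27 / 256)) := by
  constructor
  · exact ⟨1, one_ne_zero, fun z => by rw [disc3_eq]; ring⟩
  · intro z hz
    rw [disc3_eq]
    constructor
    · intro h
      rcases mul_eq_zero.1 h with h | h
      · exact absurd (pow_eq_zero_iff (by norm_num) |>.1 h) hz.ne'
      · have : 256 * z - 27 = 0 := pow_eq_zero_iff (by norm_num) |>.1 h
        linarith
    · intro h; subst h; norm_num
end

section
/- The cubic polynomial 13u^3 + (4√3-36)u^2 + (78-26√3)u + 24√3-60 has exactly one positive real root u_0, and u_0 > 1. Moreover u_0 satisfies the rational polynomial equation 13u^6 - 72u^5 + 252u^4 - 504u^3 + 600u^2 - 432u + 144 = 0. -/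
/-- The cubic `13u^3 + (4√3-36)u^2 + (78-26√3)u + 24√3-60` has exactly one positive
real root `u₀`; moreover `u₀ > 1` and `u₀` satisfies the rational polynomial equation
`13u^6 - 72u^5 + 252u^4 - 504u^3 + 600u^2 - 432u + 144 = 0`. -/
theorem root_degree_tail_singularity :
    (∃! u : ℝ, 0 < u ∧
      13 * u ^ 3 + (4 * Real.sqrt 3 - 36) * u ^ 2 + (78 - 26 * Real.sqrt 3) * u
        + 24 * Real.sqrt 3 - 60 = 0) ∧
    (∀ u : ℝ, 0 < u →
      13 * u ^ 3 + (4 * Real.sqrt 3 - 36) * u ^ 2 + (78 - 26 * Real.sqrt 3) * u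
        + 24 * Real.sqrt 3 - 60 = 0 →
      1 < u ∧
      13 * u ^ 6 - 72 * u ^ 5 + 252 * u ^ 4 - 504 * u ^ 3 + 600 * u ^ 2
        - 432 * u + 144 = 0) := by
  have hs2 : Real.sqrt 3 ^ 2 = 3 := Real.sq_sqrt (by norm_num)
  have hs0 : (0:ℝ) ≤ Real.sqrt 3 := Real.sqrt_nonneg 3
  have hs3 : Real.sqrt 3 < 1.74 := by nlinarith [hs2, hs0]
  have hs1 : (1.73:ℝ) < Real.sqrt 3 := by nlinarith [hs2, hs0]
  set s := Real.sqrt 3 with hs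
  set f : ℝ → ℝ := fun u =>
    13 * u ^ 3 + (4 * s - 36) * u ^ 2 + (78 - 26 * s) * u + 24 * s - 60 with hf
  -- key positivity of the symmetric difference quotient
  have key : ∀ u v : ℝ, 0 < u → 0 < v →
      0 < 13 * (u ^ 2 + u * v + v ^ 2) + (4 * s - 36) * (u + v) + (78 - 26 * s) := by
    intro u v hu hv
    nlinarith [sq_nonneg (u - v), sq_nonneg (39 * (u + v) + 2 * (4 * s - 36)),
      mul_pos hu hv, hs3, hs1, sq_nonneg s, sq_nonneg (u + v)]
  have hf1 : f 1 = -5 + 2 * s := by simp [hf]; ring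
  have hf1neg : f 1 < 0 := by rw [hf1]; nlinarith [hs3]
  have hf2pos : 0 < f 2 := by
    have : f 2 = 56 - 12 * s := by simp [hf]; ring
    rw [this]; nlinarith [hs3]
  have hcont : ContinuousOn f (Set.Icc (1:ℝ) 2) := by
    apply Continuous.continuousOn; fun_prop
  obtain ⟨u₀, hu₀mem, hu₀⟩ := intermediate_value_Icc (by norm_num : (1:ℝ) ≤ 2) hcont
    (Set.mem_Icc.mpr ⟨le_of_lt hf1neg, le_of_lt hf2pos⟩)
  have hu₀pos : 0 < u₀ := lt_of_lt_of_le one_pos hu₀mem.1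
  constructor
  · refine ⟨u₀, ⟨hu₀pos, by simpa [hf] using hu₀⟩, ?_⟩
    rintro v ⟨hvpos, hveq⟩
    have hq := key v u₀ hvpos hu₀pos
    have hdiff : (v - u₀) *
        (13 * (v ^ 2 + v * u₀ + u₀ ^ 2) + (4 * s - 36) * (v + u₀) + (78 - 26 * s)) = 0 := by
      have h0 : f u₀ = 0 := hu₀
      simp only [hf] at h0
      linear_combination hveq - h0
    rcases mul_eq_zero.mp hdiff with h | h
    · linarith [sub_eq_zero.mp h]
    · exact absurd h (ne_of_gt hq)
  · intro u hu hfu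
    constructor
    · have hq := key u 1 hu one_pos
      have h1 : (1 - u) *
          (13 * (u ^ 2 + u * 1 + 1 ^ 2) + (4 * s - 36) * (u + 1) + (78 - 26 * s))
          = -5 + 2 * s := by linear_combination -hfu
      nlinarith [hq, hs3]
    · linear_combination
        ((13 * u ^ 3 - (4 * s + 36) * u ^ 2 + (78 + 26 * s) * u - 24 * s - 60) / 13) * hfu
        + ((4 * u ^ 2 - 26 * u + 24) ^ 2 / 13) * hs2
end

section
/- Let q(x) be the unique formal power series with q(0)=0 satisfying q = x(1+q)^4 (the generating function of 4-ary trees). Then the function A_1(x) = (1+q)^2(1-q) satisfies x·A_1(x) = T(x), where T(x) = U(1-2U) with x = U(1-U)^3, U(0)=0. -/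
open PowerSeries

/-- Let `q(x)` be the 4-ary tree series: `q(0) = 0` and `q = x(1+q)^4`, and let `U`
satisfy `U(0) = 0` and `x = U(1-U)^3`.  Then `A₁(x) = (1+q)^2(1-q)` satisfies
`x · A₁(x) = T(x)` where `T = U(1-2U)`. -/
theorem loopless_maps_vs_triangulations (q U : PowerSeries ℚ)
    (hq0 : constantCoeff q = 0)
    (hq : q = X * (1 + q) ^ 4)
    (hU0 : constantCoeff U = 0)
    (hU : (X : PowerSeries ℚ) = U * (1 - U) ^ 3) :
    X * ((1 + q) ^ 2 * (1 - q)) = U * (1 - 2 * U) := by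
  have hc : constantCoeff (1 + q) ≠ 0 := by simp [hq0]
  set i := (1 + q)⁻¹ with hi
  have hmul : (1 + q) * i = 1 := PowerSeries.mul_inv_cancel _ hc
  set V := q * i with hV
  have hV0 : constantCoeff V = 0 := by simp [hV, map_mul, hq0]
  have h1V : 1 - V = i := by
    calc 1 - V = (1 + q) * i - q * i := by rw [hmul]
    _ = i := by ring
  have hXV : (X : PowerSeries ℚ) = V * (1 - V) ^ 3 := by
    have e1 : V * (1 - V)^3 = q * i^4 := by rw [h1V, hV]; ring
    have e2 : q * i^4 = X * ((1+q)^4 * i^4) := by linear_combination i^4 * hq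
    have e3 : (1+q)^4 * i^4 = 1 := by rw [← mul_pow, hmul]; ring
    rw [e1, e2, e3, mul_one]
  have key : (U - V) * (1 - 3*(U+V) + 3*(U^2+U*V+V^2) - (U^3+U^2*V+U*V^2+V^3)) = 0 := by
    have h : U * (1-U)^3 = V * (1-V)^3 := by rw [← hU, ← hXV]
    linear_combination h
  have hPne : (1 - 3*(U+V) + 3*(U^2+U*V+V^2) - (U^3+U^2*V+U*V^2+V^3)) ≠ 0 := by
    intro h
    have h' := congrArg constantCoeff h
    simp [map_sub, map_add, map_mul, map_pow, hU0, hV0] at h'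
  have hUV : U = V := by
    rcases mul_eq_zero.mp key with h | h
    · exact sub_eq_zero.mp h
    · exact absurd h hPne
  rw [hUV]
  have h2V : 1 - 2*V = (1 - q) * i := by
    calc 1 - 2*V = (1+q)*i - 2*(q*i) := by rw [hmul, hV]
    _ = (1-q)*i := by ring
  rw [h2V, hV]
  have e1 : q * i * ((1-q)*i) = X * ((1+q)^2*(1-q)) * ((1+q)^2 * i^2) := by
    linear_combination ((1-q) * i^2) * hq
  have e2 : (1+q)^2 * i^2 = 1 := by rw [← mul_pow, hmul]; ring
  rw [e1, e2, mul_one]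
end

section
/- With θ = 2^{1/3}·3/8, σ = 2^{1/3}√3/6, D_0 = 2^{2/3}(9/4 - √3), and D_2 = 2^{2/3}(9/2 + √3): (a) α_0 := (2θ - σ)/(2θ - σ(1 - σD_2)) = 1/2 - √3/9; (b) β_0 := σ^2 D_0/(2θ - σ) = 19/46 - 3√3/23; (c) α_0(1 - β_0) = 1/4. -/
/-- With `θ = 3·2^(1/3)/8`, `σ = 2^(1/3)√3/6`, `D₀ = 2^(2/3)(9/4 - √3)` and
`D₂ = 2^(2/3)(9/2 + √3)`:
(a) `α₀ = (2θ - σ)/(2θ - σ(1 - σD₂)) = 1/2 - √3/9`;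
(b) `β₀ = σ²D₀/(2θ - σ) = 19/46 - 3√3/23`;
(c) `α₀(1 - β₀) = 1/4`. -/
theorem three_connected_core_constants :
    let θ : ℝ := (2 : ℝ) ^ ((1 : ℝ) / 3) * 3 / 8
    let σ : ℝ := (2 : ℝ) ^ ((1 : ℝ) / 3) * Real.sqrt 3 / 6
    let D0 : ℝ := (2 : ℝ) ^ ((2 : ℝ) / 3) * (9 / 4 - Real.sqrt 3)
    let D2 : ℝ := (2 : ℝ) ^ ((2 : ℝ) / 3) * (9 / 2 + Real.sqrt 3)
    let α0 : ℝ := (2 * θ - σ) / (2 * θ - σ * (1 - σ * D2))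
    let β0 : ℝ := σ ^ 2 * D0 / (2 * θ - σ)
    α0 = 1 / 2 - Real.sqrt 3 / 9 ∧
    β0 = 19 / 46 - 3 * Real.sqrt 3 / 23 ∧
    α0 * (1 - β0) = 1 / 4 := by
  intro θ σ D0 D2 α0 β0
  set c : ℝ := (2 : ℝ) ^ ((1 : ℝ) / 3) with hcdef
  set s : ℝ := Real.sqrt 3 with hsdef
  have hcpos : 0 < c := Real.rpow_pos_of_pos (by norm_num) _
  have hc3 : c ^ 3 = 2 := by
    rw [hcdef, ← Real.rpow_natCast (_ ^ _), ← Real.rpow_mul (by norm_num)]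
    norm_num
  have hc2 : (2 : ℝ) ^ ((2 : ℝ) / 3) = c ^ 2 := by
    rw [hcdef, ← Real.rpow_natCast (_ ^ _), ← Real.rpow_mul (by norm_num)]
    norm_num
  have hs2 : s ^ 2 = 3 := Real.sq_sqrt (by norm_num)
  have hs0 : 0 ≤ s := Real.sqrt_nonneg _
  have hslt : s < 2 := by nlinarith
  -- the two denominators
  have hden1 : 2 * θ - σ * (1 - σ * D2) = 3 * c / 2 := by
    show 2 * (c * 3 / 8) -
        c * s / 6 * (1 - c * s / 6 * ((2 : ℝ) ^ ((2 : ℝ) / 3) * (9 / 2 + s)))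
        = 3 * c / 2
    rw [hc2]
    linear_combination (c ^ 4 * (9 / 2 + s) / 36) * hs2 + (c * (9 / 2 + s) / 12) * hc3
  have hden2 : 2 * θ - σ = c * (9 - 2 * s) / 12 := by
    show 2 * (c * 3 / 8) - c * s / 6 = c * (9 - 2 * s) / 12
    ring
  have hden2pos : 0 < 2 * θ - σ := by
    rw [hden2]
    have h9 : 0 < 9 - 2 * s := by nlinarith
    positivity
  have hden2ne : 2 * θ - σ ≠ 0 := ne_of_gt hden2pos
  have hden1ne : 2 * θ - σ * (1 - σ * D2) ≠ 0 := by
    rw [hden1]; positivity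
  have ha : α0 = 1 / 2 - s / 9 := by
    show (2 * θ - σ) / (2 * θ - σ * (1 - σ * D2)) = 1 / 2 - s / 9
    rw [hden1, hden2, div_eq_iff (by positivity)]
    ring
  have hb : β0 = 19 / 46 - 3 * s / 23 := by
    show σ ^ 2 * D0 / (2 * θ - σ) = 19 / 46 - 3 * s / 23
    rw [div_eq_iff hden2ne, hden2]
    show (c * s / 6) ^ 2 * ((2 : ℝ) ^ ((2 : ℝ) / 3) * (9 / 4 - s))
        = (19 / 46 - 3 * s / 23) * (c * (9 - 2 * s) / 12)
    rw [hc2]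
    linear_combination (c ^ 4 * (9 / 4 - s) / 36 - c / 46) * hs2
      + (c * (9 / 4 - s) / 12) * hc3
  refine ⟨ha, hb, ?_⟩
  rw [ha, hb]
  linear_combination (-(1 : ℝ) / 69) * hs2
end
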